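/- arXiv:1512.00703 — 7 statements merged into one kernel-verified Lean document; each statement's English description precedes it below -/
import Mathlib

section
/- Let E, F, G be Archimedean Riesz spaces and φ : E × F → G a positive bilinear map. If sequences (fₙ) in E and (gₙ) in F converge relatively uniformly to f and g respectively, then the sequence (φ(fₙ, gₙ)) converges relatively uniformly to φ(f, g). -/
/-!
Positivity gives `|φ x y| ≤ φ |x| |y|`, so from
`φ fₙ gₙ - φ f g = φ (fₙ - f) gₙ + φ f (gₙ - g)` and the eventual bound `|gₙ| ≤ |g| + w`
(with `u`, `w` regulators of `fₙ → f`, `gₙ → g`) the difference is eventually at most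
`ε • (φ u (|g| + w) + φ |f| w)`.
-/

/-- Relatively uniform convergence of a sequence in a Riesz space. -/
def RUConv {E : Type*} [AddCommGroup E] [Lattice E] [Module ℝ E]
    (f : ℕ → E) (l : E) : Prop :=
  ∃ v : E, ∀ ε : ℝ, 0 < ε → ∃ N : ℕ, ∀ n ≥ N, |f n - l| ≤ ε • v

open Filter

namespace LinearMap

variable {R E F G : Type*} [CommRing R]
    [AddCommGroup E] [Lattice E] [AddLeftMono E] [Module R E]
    [AddCommGroup F] [Lattice F] [AddLeftMono F] [Module R F]
    [AddCommGroup G] [Lattice G] [AddLeftMono G] [Module R G]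
    (φ : E →ₗ[R] F →ₗ[R] G) (hφ : ∀ x y, 0 ≤ x → 0 ≤ y → 0 ≤ φ x y)
include hφ

theorem map₂_le_map₂ {x a : E} {y b : F} (hx : 0 ≤ x) (hxa : x ≤ a) (hy : 0 ≤ y)
    (hyb : y ≤ b) : φ x y ≤ φ a b := by
  have hdiff : φ a b - φ x y = φ (a - x) b + φ x (b - y) := by
    simp only [map_sub, sub_apply]
    abel
  rw [← sub_nonneg, hdiff]
  exact add_nonneg (hφ _ _ (sub_nonneg.2 hxa) (hy.trans hyb)) (hφ _ _ hx (sub_nonneg.2 hyb))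

theorem map₂_le_map₂_abs (x : E) (y : F) : φ x y ≤ φ |x| |y| := by
  have hdiff : φ |x| |y| - φ x y = 2 • (φ x⁺ y⁻ + φ x⁻ y⁺) :=
    calc φ |x| |y| - φ x y = φ (x⁺ + x⁻) (y⁺ + y⁻) - φ (x⁺ - x⁻) (y⁺ - y⁻) := by
          rw [posPart_add_negPart, posPart_add_negPart, posPart_sub_negPart,
            posPart_sub_negPart]
      _ = 2 • (φ x⁺ y⁻ + φ x⁻ y⁺) := by
          simp only [map_add, map_sub, add_apply, sub_apply]
          abel
  rw [← sub_nonneg, hdiff]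
  exact nsmul_nonneg (add_nonneg (hφ _ _ (posPart_nonneg x) (negPart_nonneg y))
    (hφ _ _ (negPart_nonneg x) (posPart_nonneg y))) 2

theorem abs_map₂_le (x : E) (y : F) : |φ x y| ≤ φ |x| |y| := by
  refine abs_le'.2 ⟨φ.map₂_le_map₂_abs hφ x y, ?_⟩
  simpa only [map_neg, neg_apply, abs_neg] using φ.map₂_le_map₂_abs hφ (-x) y

theorem abs_map₂_sub_map₂_le (x x₀ : E) (y y₀ : F) :
    |φ x y - φ x₀ y₀| ≤ φ |x - x₀| |y| + φ |x₀| |y - y₀| :=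
  calc |φ x y - φ x₀ y₀| = |φ (x - x₀) y + φ x₀ (y - y₀)| := by
        simp only [map_sub, sub_apply, sub_add_sub_cancel]
    _ ≤ |φ (x - x₀) y| + |φ x₀ (y - y₀)| := abs_add_le _ _
    _ ≤ φ |x - x₀| |y| + φ |x₀| |y - y₀| :=
        add_le_add (φ.abs_map₂_le hφ _ _) (φ.abs_map₂_le hφ _ _)

end LinearMap

theorem positive_bilinear_ru_continuous_general
    {E F G : Type*}
    [AddCommGroup E] [Lattice E] [CovariantClass E E (· + ·) (· ≤ ·)] [Module ℝ E]
    [AddCommGroup F] [Lattice F] [CovariantClass F F (· + ·) (· ≤ ·)] [Module ℝ F]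
    [AddCommGroup G] [Lattice G] [CovariantClass G G (· + ·) (· ≤ ·)] [Module ℝ G]
    (φ : E →ₗ[ℝ] F →ₗ[ℝ] G)
    (hφpos : ∀ x : E, ∀ y : F, 0 ≤ x → 0 ≤ y → 0 ≤ φ x y)
    (f : ℕ → E) (g : ℕ → F) (f₀ : E) (g₀ : F)
    (hf : RUConv f f₀) (hg : RUConv g g₀) :
    RUConv (fun n => φ (f n) (g n)) (φ f₀ g₀) := by
  obtain ⟨u, hu⟩ := hf
  obtain ⟨w, hw⟩ := hg
  have hg_bound : ∀ᶠ n in atTop, |g n| ≤ |g₀| + w := by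
    filter_upwards [eventually_atTop.2 (hw 1 one_pos)] with n hn
    rw [one_smul] at hn
    exact sub_le_iff_le_add'.1 ((le_abs_self _).trans ((abs_abs_sub_abs_le _ _).trans hn))
  refine ⟨φ u (|g₀| + w) + φ |f₀| w, fun ε hε => eventually_atTop.1 ?_⟩
  filter_upwards [eventually_atTop.2 (hu ε hε), eventually_atTop.2 (hw ε hε), hg_bound]
    with n hfn hgn hbound
  calc |φ (f n) (g n) - φ f₀ g₀| ≤ φ |f n - f₀| |g n| + φ |f₀| |g n - g₀| :=
        φ.abs_map₂_sub_map₂_le hφpos _ _ _ _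
    _ ≤ φ (ε • u) (|g₀| + w) + φ |f₀| (ε • w) :=
        add_le_add (φ.map₂_le_map₂ hφpos (abs_nonneg _) hfn (abs_nonneg _) hbound)
          (φ.map₂_le_map₂ hφpos (abs_nonneg _) le_rfl (abs_nonneg _) hgn)
    _ = ε • (φ u (|g₀| + w) + φ |f₀| w) := by
        simp only [map_smul, LinearMap.smul_apply, smul_add]

/-- Positive bilinear maps between Archimedean Riesz spaces preserve relatively
uniform convergence of pairs of sequences. -/
theorem positive_bilinear_ru_continuous
    {E F G : Type*}
    [AddCommGroup E] [Lattice E] [CovariantClass E E (· + ·) (· ≤ ·)] [Module ℝ E]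
    [AddCommGroup F] [Lattice F] [CovariantClass F F (· + ·) (· ≤ ·)] [Module ℝ F]
    [AddCommGroup G] [Lattice G] [CovariantClass G G (· + ·) (· ≤ ·)] [Module ℝ G]
    (harchE : ∀ x y : E, (∀ n : ℕ, n • x ≤ y) → x ≤ 0)
    (harchF : ∀ x y : F, (∀ n : ℕ, n • x ≤ y) → x ≤ 0)
    (harchG : ∀ x y : G, (∀ n : ℕ, n • x ≤ y) → x ≤ 0)
    (φ : E →ₗ[ℝ] F →ₗ[ℝ] G)
    (hφpos : ∀ x : E, ∀ y : F, 0 ≤ x → 0 ≤ y → 0 ≤ φ x y)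
    (f : ℕ → E) (g : ℕ → F) (f₀ : E) (g₀ : F)
    (hf : RUConv f f₀) (hg : RUConv g g₀) :
    RUConv (fun n => φ (f n) (g n)) (φ f₀ g₀) :=
  positive_bilinear_ru_continuous_general φ hφpos f g f₀ g₀ hf hg
end

section
/- In a semiprime f-algebra A, for every positive element a one has 0 ≤ a² ≤ a + a³. -/
/-!
Split `a² - a` into its positive part `p` and negative part `q`. As `q ⊓ p = 0` and `a ≥ 0`,
the f-algebra law gives `a * q ⊓ p = 0`. But `a² - a - a³` lies below both: below `p` because
`a³ ≥ 0`, and below `a * q` because `a * q ≥ a * (a - a²) = a² - a³`. Hence `a² - a - a³ ≤ 0`.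
-/

section

variable {A : Type*} [Ring A] [Lattice A] [AddLeftMono A]

theorem mul_le_mul_left_of_mul_nonneg (hmulpos : ∀ x y : A, 0 ≤ x → 0 ≤ y → 0 ≤ x * y)
    {a x y : A} (ha : 0 ≤ a) (hxy : x ≤ y) : a * x ≤ a * y :=
  sub_nonneg.mp (mul_sub a y x ▸ hmulpos a (y - x) ha (sub_nonneg.mpr hxy))

theorem mul_negPart_inf_posPart_eq_zero
    (hfalg : ∀ f g h : A, f ⊓ g = 0 → 0 ≤ h → (h * f) ⊓ g = 0) {a : A} (ha : 0 ≤ a) (x : A) :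
    a * x⁻ ⊓ x⁺ = 0 :=
  hfalg _ _ a (inf_comm x⁺ x⁻ ▸ posPart_inf_negPart_eq_zero x) ha

theorem sq_sub_self_sub_cube_le_posPart (hmulpos : ∀ x y : A, 0 ≤ x → 0 ≤ y → 0 ≤ x * y)
    {a : A} (ha : 0 ≤ a) : a ^ 2 - a - a ^ 3 ≤ (a ^ 2 - a)⁺ := by
  have hcube : 0 ≤ a ^ 3 := by
    rw [pow_succ', sq]
    exact hmulpos a _ ha (hmulpos a a ha ha)
  exact (sub_le_self _ hcube).trans (le_posPart _)

theorem sq_sub_self_sub_cube_le_mul_negPart (hmulpos : ∀ x y : A, 0 ≤ x → 0 ≤ y → 0 ≤ x * y)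
    {a : A} (ha : 0 ≤ a) : a ^ 2 - a - a ^ 3 ≤ a * (a ^ 2 - a)⁻ :=
  calc a ^ 2 - a - a ^ 3 ≤ a ^ 2 - a ^ 3 := sub_le_sub_right (sub_le_self _ ha) _
    _ = a * -(a ^ 2 - a) := by noncomm_ring
    _ ≤ a * (a ^ 2 - a)⁻ := mul_le_mul_left_of_mul_nonneg hmulpos ha (neg_le_negPart _)

end

theorem sq_le_self_add_cube_general
    {A : Type*} [Ring A] [Lattice A] [CovariantClass A A (· + ·) (· ≤ ·)]
    (hmulpos : ∀ x y : A, 0 ≤ x → 0 ≤ y → 0 ≤ x * y)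
    (hfalg : ∀ f g h : A, f ⊓ g = 0 → 0 ≤ h → (f * h) ⊓ g = 0 ∧ (h * f) ⊓ g = 0)
    (a : A) (ha : 0 ≤ a) :
    0 ≤ a ^ 2 ∧ a ^ 2 ≤ a + a ^ 3 := by
  refine ⟨sq a ▸ hmulpos a a ha ha, ?_⟩
  have hdisjoint : a * (a ^ 2 - a)⁻ ⊓ (a ^ 2 - a)⁺ = 0 :=
    mul_negPart_inf_posPart_eq_zero (fun f g h hfg hh => (hfalg f g h hfg hh).2) ha _
  have hle : a ^ 2 - a - a ^ 3 ≤ 0 := hdisjoint ▸ le_inf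
    (sq_sub_self_sub_cube_le_mul_negPart hmulpos ha) (sq_sub_self_sub_cube_le_posPart hmulpos ha)
  rwa [sub_sub, sub_nonpos] at hle

/-- In a semiprime Archimedean f-algebra, `0 ≤ a² ≤ a + a³` for every positive `a`. -/
theorem sq_le_self_add_cube
    {A : Type*} [Ring A] [Lattice A] [CovariantClass A A (· + ·) (· ≤ ·)]
    (hmulpos : ∀ x y : A, 0 ≤ x → 0 ≤ y → 0 ≤ x * y)
    (hfalg : ∀ f g h : A, f ⊓ g = 0 → 0 ≤ h → (f * h) ⊓ g = 0 ∧ (h * f) ⊓ g = 0)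
    (hsemiprime : ∀ a : A, (∃ n : ℕ, 0 < n ∧ a ^ n = 0) → a = 0)
    (harch : ∀ x y : A, (∀ n : ℕ, n • x ≤ y) → x ≤ 0)
    (a : A) (ha : 0 ≤ a) :
    0 ≤ a ^ 2 ∧ a ^ 2 ≤ a + a ^ 3 :=
  sq_le_self_add_cube_general hmulpos hfalg a ha
end

section
/- In a semiprime f-algebra A, for all a, b ∈ A one has a⁺b⁺ = (ab)⁺ ∧ ((a + a³)⁺ + (b + b³)⁺). -/
/-!
Write `a = a⁺ - a⁻`. In an f-algebra disjoint positive elements have product zero, so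
`(ab)⁺ = a⁺b⁺ + a⁻b⁻` and `(a + a³)⁺ = a⁺ + (a⁺)³`, and `a⁻b⁻` is disjoint from
`(a⁺ + (a⁺)³) + (b⁺ + (b⁺)³)`. It remains to see that this element dominates `a⁺b⁺`:
squares are positive, so `xy ≤ xy + yx ≤ x² + y²` and `2t² ≤ t + t³` (from `t(t - 1)² ≥ 0`).
-/

section LatticeOrderedGroup

variable {G : Type*} [AddCommGroup G] [Lattice G] [AddLeftMono G] {x y z : G}

theorem inf_add_le_add_inf (hx : 0 ≤ x) (hy : 0 ≤ y) (hz : 0 ≤ z) :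
    x ⊓ (y + z) ≤ x ⊓ y + x ⊓ z := by
  rw [add_inf, inf_add, inf_add]
  refine le_inf (le_inf ?_ ?_) (le_inf ?_ inf_le_right)
  · exact inf_le_left.trans (le_add_of_nonneg_left hx)
  · exact inf_le_left.trans (le_add_of_nonneg_left hy)
  · exact inf_le_left.trans (le_add_of_nonneg_right hz)

theorem inf_add_eq_zero (hx : 0 ≤ x) (hy : 0 ≤ y) (hz : 0 ≤ z)
    (hxy : x ⊓ y = 0) (hxz : x ⊓ z = 0) : x ⊓ (y + z) = 0 :=
  le_antisymm (by simpa [hxy, hxz] using inf_add_le_add_inf hx hy hz)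
    (le_inf hx (add_nonneg hy hz))

theorem add_inf_eq_zero (hx : 0 ≤ x) (hy : 0 ≤ y) (hz : 0 ≤ z)
    (hxz : x ⊓ z = 0) (hyz : y ⊓ z = 0) : (x + y) ⊓ z = 0 := by
  rw [inf_comm] at hxz hyz ⊢
  exact inf_add_eq_zero hz hx hy hxz hyz

theorem posPart_sub_eq_of_inf_eq_zero (h : x ⊓ y = 0) : (x - y)⁺ = x := by
  have hsup : x ⊔ y = x + y := by simpa [h] using inf_add_sup x y
  apply add_right_cancel (b := y)
  rw [posPart_def, sup_add, sub_add_cancel, zero_add, hsup]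

theorem add_inf_eq_of_le_of_inf_eq_zero (hx : 0 ≤ x) (hy : 0 ≤ y) (hxz : x ≤ z)
    (hyz : y ⊓ z = 0) : (x + y) ⊓ z = x := by
  refine le_antisymm ?_ (le_inf (le_add_of_nonneg_right hy) hxz)
  calc (x + y) ⊓ z ≤ (x + y) ⊓ (x + z) := inf_le_inf_left _ (le_add_of_nonneg_left hx)
    _ = x := by rw [← add_inf, hyz, add_zero]

theorem negPart_inf_posPart_eq_zero (a : G) : a⁻ ⊓ a⁺ = 0 := by
  rw [inf_comm]; exact posPart_inf_negPart_eq_zero a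

end LatticeOrderedGroup

theorem add_pow_succ_of_mul_eq_zero {R : Type*} [Semiring R] {u v : R}
    (huv : u * v = 0) (hvu : v * u = 0) (n : ℕ) :
    (u + v) ^ (n + 1) = u ^ (n + 1) + v ^ (n + 1) := by
  induction n with
  | zero => simp
  | succ n ih =>
    have huv' : u ^ (n + 1) * v = 0 := by rw [pow_succ, mul_assoc, huv, mul_zero]
    have hvu' : v ^ (n + 1) * u = 0 := by rw [pow_succ, mul_assoc, hvu, mul_zero]
    rw [pow_succ (u + v), ih, add_mul, mul_add, mul_add, huv', hvu', add_zero, zero_add,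
      ← pow_succ, ← pow_succ]

structure IsFAlgebra (A : Type*) [Ring A] [Lattice A] : Prop where
  mul_nonneg {x y : A} : 0 ≤ x → 0 ≤ y → 0 ≤ x * y
  mul_right_inf_eq_zero {x y z : A} : x ⊓ z = 0 → 0 ≤ y → x * y ⊓ z = 0
  mul_left_inf_eq_zero {x y z : A} : x ⊓ z = 0 → 0 ≤ y → y * x ⊓ z = 0

namespace IsFAlgebra

variable {A : Type*} [Ring A] [Lattice A] {x y z u : A}

theorem mul_eq_zero_of_inf_eq_zero (hA : IsFAlgebra A) (hx : 0 ≤ x) (hy : 0 ≤ y)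
    (h : x ⊓ y = 0) : x * y = 0 := by
  have hyxy : y ⊓ x * y = 0 := by rw [inf_comm]; exact hA.mul_right_inf_eq_zero h hy
  simpa using hA.mul_left_inf_eq_zero hyxy hx

theorem mul_inf_mul_left_eq_zero (hA : IsFAlgebra A) (h : x ⊓ y = 0) (hz : 0 ≤ z) :
    z * x ⊓ z * y = 0 := by
  have hzx : z * x ⊓ y = 0 := hA.mul_left_inf_eq_zero h hz
  rw [inf_comm] at hzx ⊢
  exact hA.mul_left_inf_eq_zero hzx hz

theorem mul_inf_mul_right_eq_zero (hA : IsFAlgebra A) (h : x ⊓ y = 0) (hz : 0 ≤ z) :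
    x * z ⊓ y * z = 0 := by
  have hxz : x * z ⊓ y = 0 := hA.mul_right_inf_eq_zero h hz
  rw [inf_comm] at hxz ⊢
  exact hA.mul_right_inf_eq_zero hxz hz

theorem pow_succ_inf_eq_zero (hA : IsFAlgebra A) (hu : 0 ≤ u) (h : u ⊓ x = 0) (n : ℕ) :
    u ^ (n + 1) ⊓ x = 0 := by
  induction n with
  | zero => simpa using h
  | succ n ih => rw [pow_succ]; exact hA.mul_right_inf_eq_zero ih hu

theorem pow_succ_nonneg (hA : IsFAlgebra A) (hu : 0 ≤ u) (n : ℕ) : 0 ≤ u ^ (n + 1) := by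
  induction n with
  | zero => simpa using hu
  | succ n ih => rw [pow_succ]; exact hA.mul_nonneg ih hu

variable [AddLeftMono A]

theorem posPart_mul_negPart (hA : IsFAlgebra A) (a : A) : a⁺ * a⁻ = 0 :=
  hA.mul_eq_zero_of_inf_eq_zero (posPart_nonneg a) (negPart_nonneg a)
    (posPart_inf_negPart_eq_zero a)

theorem negPart_mul_posPart (hA : IsFAlgebra A) (a : A) : a⁻ * a⁺ = 0 :=
  hA.mul_eq_zero_of_inf_eq_zero (negPart_nonneg a) (posPart_nonneg a)
    (negPart_inf_posPart_eq_zero a)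

theorem inf_add_pow_three_eq_zero (hA : IsFAlgebra A) (hx : 0 ≤ x) (hu : 0 ≤ u)
    (h : x ⊓ u = 0) : x ⊓ (u + u ^ 3) = 0 := by
  have hu3 : u ^ 3 ⊓ x = 0 := hA.pow_succ_inf_eq_zero hu (by rw [inf_comm]; exact h) 2
  exact inf_add_eq_zero hx hu (hA.pow_succ_nonneg hu 2) h (by rw [inf_comm]; exact hu3)

theorem pow_succ_eq_posPart_pow_add_neg_negPart_pow (hA : IsFAlgebra A) (a : A) (n : ℕ) :
    a ^ (n + 1) = a⁺ ^ (n + 1) + (-a⁻) ^ (n + 1) := by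
  conv_lhs => rw [← posPart_sub_negPart a, sub_eq_add_neg]
  exact add_pow_succ_of_mul_eq_zero (by rw [mul_neg, hA.posPart_mul_negPart, neg_zero])
    (by rw [neg_mul, hA.negPart_mul_posPart, neg_zero]) n

theorem sq_nonneg (hA : IsFAlgebra A) (a : A) : 0 ≤ a ^ 2 := by
  rw [hA.pow_succ_eq_posPart_pow_add_neg_negPart_pow, neg_sq]
  exact add_nonneg (hA.pow_succ_nonneg (posPart_nonneg a) 1)
    (hA.pow_succ_nonneg (negPart_nonneg a) 1)

theorem posPart_add_pow_three (hA : IsFAlgebra A) (a : A) : (a + a ^ 3)⁺ = a⁺ + a⁺ ^ 3 := by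
  have hdecomp : a + a ^ 3 = (a⁺ + a⁺ ^ 3) - (a⁻ + a⁻ ^ 3) := by
    rw [hA.pow_succ_eq_posPart_pow_add_neg_negPart_pow, Odd.neg_pow (by decide)]
    nth_rw 1 [← posPart_sub_negPart a]
    abel
  have hp := posPart_nonneg a
  have hn := negPart_nonneg a
  have hnp : a⁻ ⊓ (a⁺ + a⁺ ^ 3) = 0 :=
    hA.inf_add_pow_three_eq_zero hn hp (negPart_inf_posPart_eq_zero a)
  rw [hdecomp]
  exact posPart_sub_eq_of_inf_eq_zero <| hA.inf_add_pow_three_eq_zero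
    (add_nonneg hp (hA.pow_succ_nonneg hp 2)) hn (by rw [inf_comm]; exact hnp)

theorem posPart_mul (hA : IsFAlgebra A) (a b : A) : (a * b)⁺ = a⁺ * b⁺ + a⁻ * b⁻ := by
  have hab : a * b = (a⁺ * b⁺ + a⁻ * b⁻) - (a⁺ * b⁻ + a⁻ * b⁺) := by
    conv_lhs => rw [← posPart_sub_negPart a, ← posPart_sub_negPart b]
    noncomm_ring
  have hpa := posPart_nonneg a
  have hna := negPart_nonneg a
  have hpb := posPart_nonneg b
  have hnb := negPart_nonneg b
  have ha := posPart_inf_negPart_eq_zero a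
  have hb := posPart_inf_negPart_eq_zero b
  rw [hab]
  refine posPart_sub_eq_of_inf_eq_zero <| add_inf_eq_zero (hA.mul_nonneg hpa hpb)
    (hA.mul_nonneg hna hnb) (add_nonneg (hA.mul_nonneg hpa hnb) (hA.mul_nonneg hna hpb))
    (inf_add_eq_zero (hA.mul_nonneg hpa hpb) (hA.mul_nonneg hpa hnb) (hA.mul_nonneg hna hpb)
      (hA.mul_inf_mul_left_eq_zero hb hpa) (hA.mul_inf_mul_right_eq_zero ha hpb))
    (inf_add_eq_zero (hA.mul_nonneg hna hnb) (hA.mul_nonneg hpa hnb) (hA.mul_nonneg hna hpb)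
      (hA.mul_inf_mul_right_eq_zero (negPart_inf_posPart_eq_zero a) hnb)
      (hA.mul_inf_mul_left_eq_zero (negPart_inf_posPart_eq_zero b) hna))

theorem negPart_mul_negPart_inf_eq_zero (hA : IsFAlgebra A) (a b : A) :
    a⁻ * b⁻ ⊓ ((a⁺ + a⁺ ^ 3) + (b⁺ + b⁺ ^ 3)) = 0 := by
  have hpa := posPart_nonneg a
  have hpb := posPart_nonneg b
  have hnn := hA.mul_nonneg (negPart_nonneg a) (negPart_nonneg b)
  exact inf_add_eq_zero hnn (add_nonneg hpa (hA.pow_succ_nonneg hpa 2))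
    (add_nonneg hpb (hA.pow_succ_nonneg hpb 2))
    (hA.inf_add_pow_three_eq_zero hnn hpa (hA.mul_right_inf_eq_zero (negPart_inf_posPart_eq_zero a)
      (negPart_nonneg b)))
    (hA.inf_add_pow_three_eq_zero hnn hpb (hA.mul_left_inf_eq_zero (negPart_inf_posPart_eq_zero b)
      (negPart_nonneg a)))

theorem two_nsmul_sq_le_add_pow_three (hA : IsFAlgebra A) (hu : 0 ≤ u) :
    2 • u ^ 2 ≤ u + u ^ 3 := by
  have h : 0 ≤ u * (u - 1) ^ 2 := hA.mul_nonneg hu (hA.sq_nonneg _)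
  have hexp : u * (u - 1) ^ 2 = u + u ^ 3 - 2 • u ^ 2 := by noncomm_ring
  rwa [hexp, sub_nonneg] at h

theorem sq_le_add_pow_three (hA : IsFAlgebra A) (hu : 0 ≤ u) : u ^ 2 ≤ u + u ^ 3 :=
  calc u ^ 2 ≤ 2 • u ^ 2 := by rw [two_nsmul]; exact le_add_of_nonneg_left (hA.sq_nonneg u)
    _ ≤ u + u ^ 3 := hA.two_nsmul_sq_le_add_pow_three hu

theorem mul_le_add_add_pow_three (hA : IsFAlgebra A) (hx : 0 ≤ x) (hy : 0 ≤ y) :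
    x * y ≤ (x + x ^ 3) + (y + y ^ 3) := by
  have hsq : x * y + y * x ≤ x ^ 2 + y ^ 2 := by
    have h := hA.sq_nonneg (x - y)
    have hexp : (x - y) ^ 2 = x ^ 2 + y ^ 2 - (x * y + y * x) := by noncomm_ring
    rwa [hexp, sub_nonneg] at h
  calc x * y ≤ x * y + y * x := le_add_of_nonneg_right (hA.mul_nonneg hy hx)
    _ ≤ x ^ 2 + y ^ 2 := hsq
    _ ≤ (x + x ^ 3) + (y + y ^ 3) :=
      add_le_add (hA.sq_le_add_pow_three hx) (hA.sq_le_add_pow_three hy)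

end IsFAlgebra

theorem posPart_mul_posPart_eq_general
    {A : Type*} [Ring A] [Lattice A] [CovariantClass A A (· + ·) (· ≤ ·)]
    (hmulpos : ∀ x y : A, 0 ≤ x → 0 ≤ y → 0 ≤ x * y)
    (hfalg : ∀ f g h : A, f ⊓ g = 0 → 0 ≤ h → (f * h) ⊓ g = 0 ∧ (h * f) ⊓ g = 0)
    (a b : A) :
    (a ⊔ 0) * (b ⊔ 0) = ((a * b) ⊔ 0) ⊓ (((a + a ^ 3) ⊔ 0) + ((b + b ^ 3) ⊔ 0)) := by
  have hA : IsFAlgebra A :=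
    ⟨hmulpos _ _, fun h hy => (hfalg _ _ _ h hy).1, fun h hy => (hfalg _ _ _ h hy).2⟩
  change a⁺ * b⁺ = (a * b)⁺ ⊓ ((a + a ^ 3)⁺ + (b + b ^ 3)⁺)
  rw [hA.posPart_mul, hA.posPart_add_pow_three, hA.posPart_add_pow_three]
  have hpa := posPart_nonneg a
  have hpb := posPart_nonneg b
  exact (add_inf_eq_of_le_of_inf_eq_zero (hA.mul_nonneg hpa hpb)
    (hA.mul_nonneg (negPart_nonneg a) (negPart_nonneg b))
    (hA.mul_le_add_add_pow_three hpa hpb) (hA.negPart_mul_negPart_inf_eq_zero a b)).symm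

/-- In a semiprime Archimedean f-algebra,
`a⁺b⁺ = (ab)⁺ ∧ ((a + a³)⁺ + (b + b³)⁺)`. -/
theorem posPart_mul_posPart_eq
    {A : Type*} [Ring A] [Lattice A] [CovariantClass A A (· + ·) (· ≤ ·)]
    (hmulpos : ∀ x y : A, 0 ≤ x → 0 ≤ y → 0 ≤ x * y)
    (hfalg : ∀ f g h : A, f ⊓ g = 0 → 0 ≤ h → (f * h) ⊓ g = 0 ∧ (h * f) ⊓ g = 0)
    (hsemiprime : ∀ a : A, (∃ n : ℕ, 0 < n ∧ a ^ n = 0) → a = 0)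
    (harch : ∀ x y : A, (∀ n : ℕ, n • x ≤ y) → x ≤ 0)
    (a b : A) :
    (a ⊔ 0) * (b ⊔ 0) = ((a * b) ⊔ 0) ⊓ (((a + a ^ 3) ⊔ 0) + ((b + b ^ 3) ⊔ 0)) :=
  posPart_mul_posPart_eq_general hmulpos hfalg a b
end

section
/- Let F be a vector subspace of a Riesz space E. Define L₁ = F and Lₙ₊₁ to be the vector subspace generated by Lₙ ∪ |Lₙ|, where |D| = {|x| : x ∈ D}. Then the Riesz subspace generated by F (the smallest Riesz subspace of E containing F) equals the union ⋃ₙ Lₙ. -/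
/-!
Each `Lₙ` lies in every Riesz subspace containing `F`, by induction on `n`. Conversely the
chain `Lₙ` is increasing, so its union is a vector subspace, and it is closed under `|·|`
because `|x| ∈ Lₙ₊₁` for `x ∈ Lₙ`.
-/

namespace Submodule

variable {R M : Type*} [Semiring R] [AddCommMonoid M] [Module R M]
  {f : M → M} {L : ℕ → Submodule R M}

theorem monotone_of_eq_span_union_image
    (hL : ∀ n, L (n + 1) = span R ((L n : Set M) ∪ f '' (L n : Set M))) : Monotone L :=
  monotone_nat_of_le_succ fun n => hL n ▸ fun _ hx => subset_span (Or.inl hx)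

theorem le_of_eq_span_union_image {S : Submodule R M} (hS : ∀ x ∈ S, f x ∈ S)
    (hL : ∀ n, L (n + 1) = span R ((L n : Set M) ∪ f '' (L n : Set M)))
    (h0 : L 0 ≤ S) (n : ℕ) : L n ≤ S := by
  induction n with
  | zero => exact h0
  | succ n ih =>
    rw [hL n, span_le]
    rintro _ (hx | ⟨x, hx, rfl⟩)
    exacts [ih hx, hS x (ih hx)]

theorem map_mem_iSup_of_eq_span_union_image
    (hL : ∀ n, L (n + 1) = span R ((L n : Set M) ∪ f '' (L n : Set M)))
    {x : M} (hx : x ∈ ⨆ n, L n) : f x ∈ ⨆ n, L n := by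
  let C : ℕ →o Submodule R M := ⟨L, monotone_of_eq_span_union_image hL⟩
  obtain ⟨n, hn⟩ := (mem_iSup_of_chain C x).mp hx
  refine (mem_iSup_of_chain C (f x)).mpr ⟨n + 1, ?_⟩
  change f x ∈ L (n + 1)
  exact hL n ▸ subset_span (Or.inr ⟨x, hn, rfl⟩)

theorem sInf_setOf_le_mapsTo_eq_iSup
    (hL : ∀ n, L (n + 1) = span R ((L n : Set M) ∪ f '' (L n : Set M))) :
    sInf {S : Submodule R M | L 0 ≤ S ∧ ∀ x ∈ S, f x ∈ S} = ⨆ n, L n :=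
  le_antisymm
    (sInf_le ⟨le_iSup L 0, fun _ => map_mem_iSup_of_eq_span_union_image hL⟩)
    (le_sInf fun _ ⟨h0, hS⟩ => iSup_le (le_of_eq_span_union_image hS hL h0))

theorem coe_sInf_setOf_le_mapsTo_eq_iUnion
    (hL : ∀ n, L (n + 1) = span R ((L n : Set M) ∪ f '' (L n : Set M))) :
    ((sInf {S : Submodule R M | L 0 ≤ S ∧ ∀ x ∈ S, f x ∈ S} : Submodule R M) : Set M) =
      ⋃ n, (L n : Set M) := by
  rw [sInf_setOf_le_mapsTo_eq_iSup hL]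
  exact coe_iSup_of_chain ⟨L, monotone_of_eq_span_union_image hL⟩

end Submodule

theorem rieszSubspace_generated_eq_iUnion_general
    {E : Type*} [AddCommGroup E] [Lattice E]
    [Module ℝ E]
    (F : Submodule ℝ E)
    (L : ℕ → Submodule ℝ E)
    (hL0 : L 0 = F)
    (hLsucc : ∀ n : ℕ,
      L (n + 1) = Submodule.span ℝ ((L n : Set E) ∪ ((fun x => |x|) '' (L n : Set E)))) :
    (↑(sInf {S : Submodule ℝ E | F ≤ S ∧ ∀ x ∈ S, |x| ∈ S}) : Set E)
      = ⋃ n : ℕ, (L n : Set E) := by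
  subst hL0
  exact Submodule.coe_sInf_setOf_le_mapsTo_eq_iUnion hLsucc

/-- The Riesz subspace generated by a vector subspace `F` of a Riesz space `E`
is the union of the increasing sequence of subspaces `L₁ = F`,
`Lₙ₊₁ = span (Lₙ ∪ |Lₙ|)`. -/
theorem rieszSubspace_generated_eq_iUnion
    {E : Type*} [AddCommGroup E] [Lattice E]
    [CovariantClass E E (· + ·) (· ≤ ·)] [Module ℝ E]
    (F : Submodule ℝ E)
    (L : ℕ → Submodule ℝ E)
    (hL0 : L 0 = F)
    (hLsucc : ∀ n : ℕ,
      L (n + 1) = Submodule.span ℝ ((L n : Set E) ∪ ((fun x => |x|) '' (L n : Set E)))) :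
    (↑(sInf {S : Submodule ℝ E | F ≤ S ∧ ∀ x ∈ S, |x| ∈ S}) : Set E)
      = ⋃ n : ℕ, (L n : Set E) :=
  rieszSubspace_generated_eq_iUnion_general F L hL0 hLsucc
end

section
/- Let E and F be vector spaces and φ, ψ : E × F → ℝ bilinear functionals such that the zero-set of φ is contained in the zero-set of ψ (i.e., φ(x,y) = 0 implies ψ(x,y) = 0). Then there exists λ ∈ ℝ such that ψ = λ·φ. -/
/-!
For each `x`, the kernel of `φ x` lies in that of `ψ x`, so `ψ x = c x • φ x` for some scalar
`c x`. The coefficient `c x` does not depend on `x` (where `φ x ≠ 0`): if `φ x` and `φ x'` are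
linearly independent, comparing `ψ (x + x')` with `ψ x + ψ x'` forces `c x = c (x + x') = c x'`;
if `φ x' = t • φ x`, then `x' - t • x` lies in the kernel of `φ`, hence of `ψ`, which gives
`ψ x' = t • ψ x` and again `c x = c x'`.
-/

theorem LinearMap.exists_eq_smul_of_ker_le {K V : Type*} [Field K] [AddCommGroup V] [Module K V]
    {f g : V →ₗ[K] K} (h : ker f ≤ ker g) : ∃ t : K, g = t • f := by
  have hg : g ∈ Submodule.span K (Set.range fun _ : Unit ↦ f) :=
    mem_span_of_iInf_ker_le_ker (by simpa using h)
  rw [Set.range_const, Submodule.mem_span_singleton] at hg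
  exact hg.imp fun _ ht ↦ ht.symm

section PointwiseSmul

variable {K V W : Type*} [Field K] [AddCommGroup V] [Module K V] [AddCommGroup W] [Module K W]
  {A B : V →ₗ[K] W} {c : V → K}

theorem pointwise_coeff_eq_of_linearIndependent (hc : ∀ x, B x = c x • A x) {x y : V}
    (hxy : LinearIndependent K ![A x, A y]) : c x = c y := by
  have hsum : (c (x + y) - c x) • A x + (c (x + y) - c y) • A y = 0 := by
    have hadd := hc (x + y)
    rw [map_add, map_add, hc x, hc y] at hadd
    linear_combination (norm := module) -hadd
  obtain ⟨hx, hy⟩ := LinearIndependent.pair_iff.mp hxy _ _ hsum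
  exact (sub_eq_zero.mp hx).symm.trans (sub_eq_zero.mp hy)

theorem pointwise_coeff_eq_of_smul_eq (hc : ∀ x, B x = c x • A x) {x y : V} {t : K}
    (hy : A y ≠ 0) (hyx : t • A x = A y) : c x = c y := by
  have hker : A (y - t • x) = 0 := by rw [map_sub, map_smul, hyx, sub_self]
  have hB : B y = t • B x := by
    rw [← sub_eq_zero, ← map_smul, ← map_sub, hc, hker, smul_zero]
  refine smul_left_injective K hy (?_ : c x • A y = c y • A y)
  rw [← hc, hB, hc, smul_comm, hyx]

theorem pointwise_coeff_eq (hc : ∀ x, B x = c x • A x) {x y : V} (hx : A x ≠ 0) (hy : A y ≠ 0) :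
    c x = c y := by
  by_cases hxy : LinearIndependent K ![A x, A y]
  · exact pointwise_coeff_eq_of_linearIndependent hc hxy
  · obtain ⟨t, ht⟩ : ∃ t : K, t • A x = A y := by
      simpa [LinearIndependent.pair_iff' hx] using hxy
    exact pointwise_coeff_eq_of_smul_eq hc hy ht

theorem LinearMap.exists_eq_smul_of_forall_apply_eq_smul (hc : ∀ x, B x = c x • A x) :
    ∃ l : K, B = l • A := by
  by_cases hA : ∀ x, A x = 0
  · exact ⟨0, LinearMap.ext fun x ↦ by simp [hc x, hA x]⟩
  push Not at hA
  obtain ⟨x₀, hx₀⟩ := hA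
  refine ⟨c x₀, LinearMap.ext fun x ↦ ?_⟩
  by_cases hx : A x = 0
  · simp [hc x, hx]
  · rw [hc, pointwise_coeff_eq hc hx hx₀, LinearMap.smul_apply]

end PointwiseSmul

/-- If the zero-set of a bilinear functional `φ` is contained in the zero-set of
a bilinear functional `ψ`, then `ψ` is a scalar multiple of `φ`. -/
theorem bilinear_zero_set_subset
    {E F : Type*} [AddCommGroup E] [Module ℝ E] [AddCommGroup F] [Module ℝ F]
    (φ ψ : E →ₗ[ℝ] F →ₗ[ℝ] ℝ)
    (h : ∀ x : E, ∀ y : F, φ x y = 0 → ψ x y = 0) :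
    ∃ lam : ℝ, ∀ x : E, ∀ y : F, ψ x y = lam * φ x y := by
  choose c hc using fun x ↦ LinearMap.exists_eq_smul_of_ker_le (f := φ x) (g := ψ x) (h x)
  obtain ⟨lam, hlam⟩ := LinearMap.exists_eq_smul_of_forall_apply_eq_smul hc
  exact ⟨lam, fun x y ↦ by rw [hlam]; rfl⟩
end

section
/- Let A₁, A₂ and B be Archimedean f-algebras with unit elements e₁, e₂ and e_B respectively, and let T : A₁ × A₂ → B be a lattice (Riesz) bimorphism satisfying T(e₁, e₂) = e_B. Then T is a multiplicative bilinear map: T(a₁x₁, a₂x₂) = T(a₁, a₂)·T(x₁, x₂). -/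
/-!
Put `S = T (·) 1` and `R = T 1 (·)`, unital lattice homomorphisms into `B`. For `0 ≤ x ≤ 1` cut
`n • x` into the layers `(n • x - k • 1)⁺ ⊓ 1`, `k < n`, each in `[0, 1]` and disjoint from one
minus the previous one. Because multiplication by positive elements preserves disjointness, the
images of a layer under `T (·) y` and under `S (·) * R y` lie between the same two consecutive
terms of a decreasing sequence in `[0, 1]`; summing, `n • (T x y - S x * R y)` is squeezed by a
telescoping sum bounded by `1`, and the Archimedean property of `B` gives `T x y = S x * R y`.
The same squeeze gives `S (x * y) = S x * S y` on `[0, 1]`. Both identities compare two positive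
biadditive maps, so they extend from `[0, 1]` to `[0, m]` by additivity, to all positive elements
by truncating `x = x ⊓ m • 1 + (x - m • 1)⁺` with `m • (x - m • 1)⁺ ≤ x * x`, and to everything by
`x = x⁺ - x⁻`. Finally `T` also factors as `T x y = R y * S x`, so the factors `S x₁` and `R a₂`
commute in `T (a₁ * x₁) (a₂ * x₂) = S a₁ * S x₁ * R a₂ * R x₂`.
-/

open Finset

section LatticeOrderedGroup

variable {G : Type*} [AddCommGroup G] [Lattice G]

def layer (e x : G) (k : ℕ) : G := (x - k • e)⁺ ⊓ e

theorem layer_nonneg {e : G} (he : 0 ≤ e) (x : G) (k : ℕ) : 0 ≤ layer e x k :=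
  le_inf (posPart_nonneg _) he

theorem layer_le (e x : G) (k : ℕ) : layer e x k ≤ e := inf_le_right

variable [IsOrderedAddMonoid G]

theorem inf_add_le_add_inf_s8 {u v w : G} (hu : 0 ≤ u) (hv : 0 ≤ v) (hw : 0 ≤ w) :
    u ⊓ (v + w) ≤ u ⊓ v + u ⊓ w := by
  rw [add_inf, inf_add, inf_add]
  exact le_inf (le_inf (inf_le_left.trans (le_add_of_nonneg_right hu))
      (inf_le_left.trans (le_add_of_nonneg_left hv)))
    (le_inf (inf_le_left.trans (le_add_of_nonneg_right hw)) inf_le_right)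

theorem inf_add_eq_of_inf_eq_zero {u v w : G} (hv : 0 ≤ v) (huw : u ⊓ w = 0) :
    u ⊓ (v + w) = u ⊓ v := by
  refine le_antisymm ?_ (inf_le_inf_left u (le_add_of_nonneg_right (huw ▸ inf_le_right)))
  calc u ⊓ (v + w) ≤ u ⊓ v + u ⊓ w :=
        inf_add_le_add_inf_s8 (huw ▸ inf_le_left) hv (huw ▸ inf_le_right)
    _ = u ⊓ v := by rw [huw, add_zero]

theorem le_of_le_add_of_inf_eq_zero {u v w : G} (hv : 0 ≤ v) (h : u ≤ v + w)
    (huw : u ⊓ w = 0) : u ≤ v := by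
  rw [← inf_eq_left.2 h, inf_add_eq_of_inf_eq_zero hv huw]
  exact inf_le_right

theorem eq_of_two_nsmul_eq {a b : G} (h : 2 • a = 2 • b) : a = b := by
  rw [← sub_eq_zero]
  set c := a - b
  have hc : -c = c := neg_eq_of_add_eq_zero_left (by rw [← two_nsmul, nsmul_sub, h, sub_self])
  have hpos : c⁺ = 0 := by
    rw [← inf_idem c⁺]
    nth_rewrite 2 [← hc]
    rw [posPart_neg, posPart_inf_negPart_eq_zero]
  have hneg : c⁻ = 0 := by rw [← posPart_neg, hc, hpos]
  rw [← posPart_sub_negPart c, hpos, hneg, sub_zero]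

theorem posPart_inf_eq_inf_add_negPart {e : G} (he : 0 ≤ e) (t : G) :
    t⁺ ⊓ e = t ⊓ e + t⁻ := by
  rw [inf_add, ← eq_add_of_sub_eq (posPart_sub_negPart t),
    inf_add_eq_of_inf_eq_zero he (posPart_inf_negPart_eq_zero t)]

theorem inf_nsmul_add_layer {e : G} (he : 0 ≤ e) (x : G) (n : ℕ) :
    x ⊓ n • e + layer e x n = x ⊓ (n + 1) • e := by
  obtain ⟨t, rfl⟩ : ∃ t, x = t + n • e := ⟨x - n • e, (sub_add_cancel _ _).symm⟩
  have h₀ : t ⊓ 0 = -t⁻ := by rw [negPart_def, ← neg_zero, ← neg_inf, neg_neg, neg_zero]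
  have h₁ : (t + n • e) ⊓ n • e = t ⊓ 0 + n • e := by rw [inf_add, zero_add]
  rw [layer, add_sub_cancel_right, posPart_inf_eq_inf_add_negPart he, succ_nsmul', ← inf_add,
    h₁, h₀]
  abel

theorem sum_range_layer {e x : G} (he : 0 ≤ e) (hx : 0 ≤ x) (n : ℕ) :
    ∑ k ∈ range n, layer e x k = x ⊓ n • e := by
  induction n with
  | zero => simpa using hx
  | succ n ih => rw [sum_range_succ, ih, inf_nsmul_add_layer he]

theorem sub_layer_inf_layer_succ {e : G} (he : 0 ≤ e) (x : G) (k : ℕ) :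
    (e - layer e x k) ⊓ layer e x (k + 1) = 0 := by
  set t := x - k • e
  have hsub : x - (k + 1) • e = t - e := by rw [succ_nsmul', sub_add_eq_sub_sub_swap]
  have h₁ : e - layer e x k = (t⁺ - e)⁻ := by
    rw [layer, sub_inf, sub_self, negPart_def, neg_sub]
  have h₂ : layer e x (k + 1) ≤ (t⁺ - e)⁺ := by
    rw [layer, hsub]
    exact inf_le_left.trans (posPart_mono (sub_le_sub_right (le_posPart t) e))
  refine le_antisymm ?_ (le_inf (h₁ ▸ negPart_nonneg _) (layer_nonneg he x _))
  calc (e - layer e x k) ⊓ layer e x (k + 1) ≤ (t⁺ - e)⁻ ⊓ (t⁺ - e)⁺ := by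
        rw [h₁]; exact inf_le_inf_left _ h₂
    _ = 0 := by rw [inf_comm, posPart_inf_negPart_eq_zero]

theorem sum_range_sub_sum_le {a b c : ℕ → G} (ha : ∀ k, a k ≤ c k) (hb : ∀ k, c (k + 1) ≤ b k)
    (n : ℕ) : ∑ k ∈ range n, a k - ∑ k ∈ range n, b k ≤ c 0 - c n := by
  rw [← sum_range_sub', ← sum_sub_distrib]
  exact sum_le_sum fun k _ => sub_le_sub (ha k) (hb k)

theorem eq_of_forall_nsmul_sub_le (harch : ∀ x y : G, (∀ n : ℕ, n • x ≤ y) → x ≤ 0)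
    {a b c : G} (h : ∀ n : ℕ, n • (a - b) ≤ c ∧ n • (b - a) ≤ c) : a = b :=
  le_antisymm (sub_nonpos.1 (harch _ c fun n => (h n).1))
    (sub_nonpos.1 (harch _ c fun n => (h n).2))

theorem AddMonoidHom.ext_of_nonneg {M : Type*} [AddGroup M] {f g : G →+ M}
    (h : ∀ x, 0 ≤ x → f x = g x) : f = g :=
  AddMonoidHom.ext fun x => by
    rw [← posPart_sub_negPart x, map_sub, map_sub, h _ (posPart_nonneg x),
      h _ (negPart_nonneg x)]

theorem AddMonoidHom.apply_eq_of_le_nsmul {M : Type*} [AddCommMonoid M] {f g : G →+ M} {e : G}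
    (he : 0 ≤ e) (h : Set.EqOn f g (Set.Icc 0 e)) {x : G} (hx₀ : 0 ≤ x) {n : ℕ}
    (hx : x ≤ n • e) : f x = g x := by
  rw [← inf_eq_left.2 hx, ← sum_range_layer he hx₀, map_sum, map_sum]
  exact sum_congr rfl fun k _ => h ⟨layer_nonneg he x k, layer_le e x k⟩

end LatticeOrderedGroup

section RieszHom

variable {G H : Type*} [AddCommGroup G] [Lattice G] [IsOrderedAddMonoid G]
  [AddCommGroup H] [Lattice H] [IsOrderedAddMonoid H] {S : G →+ H}

theorem map_nonneg_of_map_abs (hS : ∀ x, S |x| = |S x|) {x : G} (hx : 0 ≤ x) : 0 ≤ S x := by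
  rw [← abs_of_nonneg hx, hS]
  exact abs_nonneg _

theorem monotone_of_map_abs (hS : ∀ x, S |x| = |S x|) : Monotone S :=
  (monotone_iff_map_nonneg S).2 fun _ => map_nonneg_of_map_abs hS

theorem map_posPart_of_map_abs (hS : ∀ x, S |x| = |S x|) (x : G) : S x⁺ = (S x)⁺ :=
  eq_of_two_nsmul_eq <| by
    rw [← map_nsmul, ← add_abs_eq_two_nsmul_posPart, ← add_abs_eq_two_nsmul_posPart, map_add, hS]

theorem map_inf_of_map_abs (hS : ∀ x, S |x| = |S x|) (x y : G) : S (x ⊓ y) = S x ⊓ S y := by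
  rw [inf_eq_sub_posPart_sub, inf_eq_sub_posPart_sub, map_sub, map_posPart_of_map_abs hS, map_sub]

end RieszHom

theorem mul_le_inf_of_le_one {A : Type*} [Ring A] [Lattice A] [IsOrderedRing A] {u v : A}
    (hu₀ : 0 ≤ u) (hu₁ : u ≤ 1) (hv₀ : 0 ≤ v) (hv₁ : v ≤ 1) : u * v ≤ u ⊓ v :=
  le_inf (mul_le_of_le_one_right hu₀ hv₁) (mul_le_of_le_one_left hv₀ hu₁)

/-- Together with `[IsOrderedRing A]` this makes `A` an f-algebra: multiplication by a positive
element preserves disjointness. -/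
def IsFAlgebra_s8 (A : Type*) [Ring A] [Lattice A] : Prop :=
  ∀ f g h : A, f ⊓ g = 0 → 0 ≤ h → f * h ⊓ g = 0 ∧ h * f ⊓ g = 0

namespace IsFAlgebra_s8

variable {A : Type*} [Ring A] [Lattice A]

theorem mul_eq_zero_of_inf_eq_zero_s8 (hA : IsFAlgebra_s8 A) {f g : A} (h : f ⊓ g = 0) :
    f * g = 0 := by
  have hf : 0 ≤ f := h ▸ inf_le_left
  have hg : 0 ≤ g := h ▸ inf_le_right
  -- `f * g` is disjoint from `g`, hence, multiplying `g` by `f`, from itself.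
  have hfg : g ⊓ f * g = 0 := by rw [inf_comm]; exact (hA f g g h hg).1
  simpa using (hA g (f * g) f hfg hf).2

theorem isOrderedRing [AddLeftMono A] (hA : IsFAlgebra_s8 A)
    (hmul : ∀ x y : A, 0 ≤ x → 0 ≤ y → 0 ≤ x * y) : IsOrderedRing A := by
  have : IsOrderedAddMonoid A := { add_le_add_left := fun _ _ h c => add_le_add_left h c }
  have hneg : (1 : A)⁻ = -(1⁻ * 1⁻) := by
    have h₀ : (1 : A)⁺ * 1⁻ = 0 := hA.mul_eq_zero_of_inf_eq_zero_s8 (posPart_inf_negPart_eq_zero 1)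
    calc (1 : A)⁻ = (1⁺ - 1⁻) * 1⁻ := by rw [posPart_sub_negPart, one_mul]
      _ = -(1⁻ * 1⁻) := by rw [sub_mul, h₀, zero_sub]
  have : ZeroLEOneClass A := ⟨negPart_eq_zero.1 <| le_antisymm
    (hneg ▸ neg_nonpos.2 (hmul _ _ (negPart_nonneg 1) (negPart_nonneg 1))) (negPart_nonneg 1)⟩
  exact IsOrderedRing.of_mul_nonneg hmul

variable [IsOrderedRing A]

theorem inf_le_mul (hA : IsFAlgebra_s8 A) {u u' v : A} (h : (1 - u) ⊓ u' = 0) (hu : 0 ≤ u)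
    (hv : 0 ≤ v) : u' ⊓ v ≤ u * v := by
  have hw : (1 - u) ⊓ (u' ⊓ v) = 0 := le_antisymm (h ▸ inf_le_inf_left _ inf_le_left)
    (le_inf (h ▸ inf_le_left) (le_inf (h ▸ inf_le_right) hv))
  have hzero := hA.mul_eq_zero_of_inf_eq_zero_s8 hw
  rw [sub_mul, one_mul, sub_eq_zero] at hzero
  calc u' ⊓ v = u * (u' ⊓ v) := hzero
    _ ≤ u * v := mul_le_mul_of_nonneg_left inf_le_right hu

theorem nsmul_posPart_sub_le_mul_self (hA : IsFAlgebra_s8 A) {x : A} (hx : 0 ≤ x) (m : ℕ) :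
    m • (x - m • 1)⁺ ≤ x * x := by
  set r := (x - m • (1 : A))⁺
  have hr : r * (x - m • 1)⁻ = 0 := hA.mul_eq_zero_of_inf_eq_zero_s8 (posPart_inf_negPart_eq_zero _)
  have hrx : r ≤ x := (posPart_mono (sub_le_self _ (nsmul_nonneg zero_le_one m))).trans_eq
    (posPart_eq_self.2 hx)
  have hsq : r * x - m • r = r * r := by
    rw [← mul_one r, ← mul_smul_comm, mul_one, ← mul_sub, ← posPart_sub_negPart (x - m • 1),
      mul_sub, hr, sub_zero]
  calc m • r ≤ r * x := sub_nonneg.1 (hsq ▸ mul_nonneg (posPart_nonneg _) (posPart_nonneg _))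
    _ ≤ x * x := mul_le_mul_of_nonneg_right hrx hx

end IsFAlgebra_s8

section Extension

variable {A C B : Type*} [Ring A] [Lattice A] [IsOrderedRing A] [Ring C] [Lattice C]
  [IsOrderedRing C] [AddCommGroup B] [Lattice B] [IsOrderedAddMonoid B]

theorem AddMonoidHom.eq_of_eqOn_Icc_one (hA : IsFAlgebra_s8 A)
    (harch : ∀ x y : B, (∀ n : ℕ, n • x ≤ y) → x ≤ 0) {f g : A →+ B}
    (hf : ∀ x, 0 ≤ x → 0 ≤ f x) (hg : ∀ x, 0 ≤ x → 0 ≤ g x) (h : Set.EqOn f g (Set.Icc 0 1)) :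
    f = g := by
  refine AddMonoidHom.ext_of_nonneg fun x hx => ?_
  refine eq_of_forall_nsmul_sub_le harch (c := f (x * x) + g (x * x)) fun m => ?_
  -- Below `m • 1` the maps agree, and the rest `r` of `x` satisfies `m • r ≤ x * x`.
  set r := (x - m • (1 : A))⁺
  have hsplit : f x - g x = f r - g r := by
    have := apply_eq_of_le_nsmul zero_le_one h (le_inf hx (nsmul_nonneg zero_le_one m)) inf_le_right
    rw [← sub_add_cancel x r, ← inf_eq_sub_posPart_sub, map_add, map_add, this]
    abel
  have hbound : ∀ φ ψ : A →+ B, (∀ x, 0 ≤ x → 0 ≤ φ x) → (∀ x, 0 ≤ x → 0 ≤ ψ x) →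
      m • (φ r - ψ r) ≤ φ (x * x) + ψ (x * x) := fun φ ψ hφ hψ =>
    calc m • (φ r - ψ r) ≤ φ (m • r) := by
          rw [map_nsmul]; exact nsmul_le_nsmul_right (sub_le_self _ (hψ r (posPart_nonneg _))) m
      _ ≤ φ (x * x) := (monotone_iff_map_nonneg φ).2 hφ (hA.nsmul_posPart_sub_le_mul_self hx m)
      _ ≤ φ (x * x) + ψ (x * x) := le_add_of_nonneg_right (hψ _ (mul_nonneg hx hx))
  rw [← neg_sub (f x), hsplit, neg_sub]
  exact ⟨hbound f g hf hg, add_comm (f (x * x)) _ ▸ hbound g f hg hf⟩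

theorem AddMonoidHom.eq_of_eqOn_Icc_one₂ (hA : IsFAlgebra_s8 A) (hC : IsFAlgebra_s8 C)
    (harch : ∀ x y : B, (∀ n : ℕ, n • x ≤ y) → x ≤ 0) {Φ Ψ : A →+ C →+ B}
    (hΦ : ∀ x y, 0 ≤ x → 0 ≤ y → 0 ≤ Φ x y) (hΨ : ∀ x y, 0 ≤ x → 0 ≤ y → 0 ≤ Ψ x y)
    (h : ∀ x ∈ Set.Icc (0 : A) 1, ∀ y ∈ Set.Icc (0 : C) 1, Φ x y = Ψ x y) : Φ = Ψ := by
  have hflip : ∀ y ∈ Set.Icc (0 : C) 1, Φ.flip y = Ψ.flip y := fun y hy =>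
    eq_of_eqOn_Icc_one hA harch (hΦ · y · hy.1) (hΨ · y · hy.1) fun x hx => h x hx y hy
  exact ext_of_nonneg fun x hx => eq_of_eqOn_Icc_one hC harch (hΦ x · hx) (hΨ x · hx)
    fun y hy => DFunLike.congr_fun (hflip y hy) x

end Extension

section Multiplicativity

variable {G A B : Type*} [AddCommGroup G] [Lattice G] [IsOrderedAddMonoid G]
  [Ring A] [Lattice A] [IsOrderedRing A] [Ring B] [Lattice B] [IsOrderedRing B]

theorem apply_eq_map_mul_of_layer_bounds (hB : IsFAlgebra_s8 B)
    (harch : ∀ x y : B, (∀ n : ℕ, n • x ≤ y) → x ≤ 0) {S φ : G →+ B}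
    (hS : ∀ x, S |x| = |S x|) {e : G} (he : 0 ≤ e) (hSe : S e = 1) {q : B} (hq₀ : 0 ≤ q)
    (hq₁ : q ≤ 1)
    (hφ : ∀ u u', 0 ≤ u → u ≤ e → (e - u) ⊓ u' = 0 → S u' ⊓ q ≤ φ u ∧ φ u ≤ S u ⊓ q)
    {x : G} (hx₀ : 0 ≤ x) (hx₁ : x ≤ e) : φ x = S x * q := by
  -- Both `φ (u k)` and `S (u k) * q` lie between `c (k + 1)` and `c k`, and the `n` layers `u k`
  -- of `n • x` sum to `n • x`, so `n • (φ x - S x * q)` is squeezed by a telescoping sum.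
  refine eq_of_forall_nsmul_sub_le harch (c := 1) fun n => ?_
  set u := layer e (n • x)
  set c : ℕ → B := fun k => S (u k) ⊓ q
  have hu₀ : ∀ k, 0 ≤ S (u k) := fun k => map_nonneg_of_map_abs hS (layer_nonneg he _ k)
  have hsum : ∑ k ∈ range n, u k = n • x := by
    rw [sum_range_layer he (nsmul_nonneg hx₀ n), inf_eq_left.2 (nsmul_le_nsmul_right hx₁ n)]
  have hφn : n • φ x = ∑ k ∈ range n, φ (u k) := by rw [← map_nsmul, ← hsum, map_sum]
  have hSn : n • (S x * q) = ∑ k ∈ range n, S (u k) * q := by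
    rw [← sum_mul, ← map_sum, hsum, map_nsmul, smul_mul_assoc]
  have hφk : ∀ k, c (k + 1) ≤ φ (u k) ∧ φ (u k) ≤ c k := fun k =>
    hφ _ _ (layer_nonneg he _ k) (layer_le e _ k) (sub_layer_inf_layer_succ he _ k)
  have hSk : ∀ k, c (k + 1) ≤ S (u k) * q ∧ S (u k) * q ≤ c k := fun k => by
    have hdisj : (1 - S (u k)) ⊓ S (u (k + 1)) = 0 := by
      rw [← hSe, ← map_sub, ← map_inf_of_map_abs hS, sub_layer_inf_layer_succ he, map_zero]
    exact ⟨hB.inf_le_mul hdisj (hu₀ k) hq₀, mul_le_inf_of_le_one (hu₀ k)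
      (hSe ▸ monotone_of_map_abs hS (layer_le e _ k)) hq₀ hq₁⟩
  have hc : c 0 - c n ≤ 1 :=
    (sub_le_self _ (le_inf (hu₀ n) hq₀)).trans (inf_le_right.trans hq₁)
  rw [nsmul_sub, nsmul_sub, hφn, hSn]
  exact ⟨(sum_range_sub_sum_le (fun k => (hφk k).2) (fun k => (hSk k).1) n).trans hc,
    (sum_range_sub_sum_le (fun k => (hSk k).2) (fun k => (hφk k).1) n).trans hc⟩

theorem map_mul_of_map_abs (hA : IsFAlgebra_s8 A) (hB : IsFAlgebra_s8 B)
    (harch : ∀ x y : B, (∀ n : ℕ, n • x ≤ y) → x ≤ 0) {S : A →+ B} (hS : ∀ x, S |x| = |S x|)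
    (h1 : S 1 = 1) (x y : A) : S (x * y) = S x * S y := by
  have hpos : ∀ {x}, 0 ≤ x → 0 ≤ S x := map_nonneg_of_map_abs hS
  suffices AddMonoidHom.mul.compr₂ S = (AddMonoidHom.mul.comp S).compl₂ S from
    DFunLike.congr_fun (DFunLike.congr_fun this x) y
  refine AddMonoidHom.eq_of_eqOn_Icc_one₂ hA hA harch (fun x y hx hy => hpos (mul_nonneg hx hy))
    (fun x y hx hy => mul_nonneg (hpos hx) (hpos hy)) fun x hx y hy => ?_
  refine apply_eq_map_mul_of_layer_bounds hB harch (φ := S.comp (AddMonoidHom.mulRight y)) hS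
    zero_le_one h1 (hpos hy.1) (h1 ▸ monotone_of_map_abs hS hy.2) (fun u u' hu₀ hu₁ h => ?_)
    hx.1 hx.2
  rw [← map_inf_of_map_abs hS, ← map_inf_of_map_abs hS]
  exact ⟨monotone_of_map_abs hS (hA.inf_le_mul h hu₀ hy.1),
    monotone_of_map_abs hS (mul_le_inf_of_le_one hu₀ hu₁ hy.1 hy.2)⟩

end Multiplicativity

section Bimorphism

variable {A C B : Type*} [Ring A] [Lattice A] [IsOrderedRing A] [Ring C] [Lattice C]
  [IsOrderedRing C] [Ring B] [Lattice B] [IsOrderedRing B] {T : A →+ C →+ B}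

theorem inf_le_apply_and_apply_le_inf (hT : ∀ y, 0 ≤ y → ∀ x, T |x| y = |T x y|) {u u' : A}
    {y : C} (hu₀ : 0 ≤ u) (hu₁ : u ≤ 1) (hy₀ : 0 ≤ y) (hy₁ : y ≤ 1) (h : (1 - u) ⊓ u' = 0) :
    T u' 1 ⊓ T 1 y ≤ T u y ∧ T u y ≤ T u 1 ⊓ T 1 y := by
  have hpos : ∀ x y, 0 ≤ x → 0 ≤ y → 0 ≤ T x y := fun x y hx hy =>
    map_nonneg_of_map_abs (S := T.flip y) (hT y hy) hx
  have hmono : ∀ x, 0 ≤ x → Monotone (T x) := fun x hx =>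
    (monotone_iff_map_nonneg _).2 (hpos x · hx)
  have hsum : T u y + T (1 - u) y = T 1 y := by
    rw [← AddMonoidHom.add_apply, ← map_add, add_sub_cancel]
  have hdisj : T u' 1 ⊓ T 1 y ⊓ T (1 - u) y = 0 := by
    have hu' : 0 ≤ u' := h ▸ inf_le_right
    have hu : 0 ≤ 1 - u := h ▸ inf_le_left
    refine le_antisymm ?_ (le_inf (le_inf (hpos _ _ hu' zero_le_one) (hpos _ _ zero_le_one hy₀))
      (hpos _ _ hu hy₀))
    calc T u' 1 ⊓ T 1 y ⊓ T (1 - u) y ≤ T.flip 1 u' ⊓ T.flip 1 (1 - u) :=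
          inf_le_inf inf_le_left (hmono _ hu hy₁)
      _ = 0 := by rw [← map_inf_of_map_abs (hT 1 zero_le_one), inf_comm, h, map_zero]
  refine ⟨le_of_le_add_of_inf_eq_zero (hpos _ _ hu₀ hy₀) (inf_le_right.trans hsum.ge) hdisj,
    le_inf (hmono u hu₀ hy₁) (monotone_of_map_abs (S := T.flip y) (hT y hy₀) hu₁)⟩

theorem apply_eq_mul_of_map_abs (hA : IsFAlgebra_s8 A) (hC : IsFAlgebra_s8 C) (hB : IsFAlgebra_s8 B)
    (harch : ∀ x y : B, (∀ n : ℕ, n • x ≤ y) → x ≤ 0)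
    (hT : ∀ y, 0 ≤ y → ∀ x, T |x| y = |T x y|) (h1 : T 1 1 = 1) (x : A) (y : C) :
    T x y = T x 1 * T 1 y := by
  have hpos : ∀ x y, 0 ≤ x → 0 ≤ y → 0 ≤ T x y := fun x y hx hy =>
    map_nonneg_of_map_abs (S := T.flip y) (hT y hy) hx
  suffices T = (AddMonoidHom.mul.comp (T.flip 1)).compl₂ (T 1) from
    DFunLike.congr_fun (DFunLike.congr_fun this x) y
  refine AddMonoidHom.eq_of_eqOn_Icc_one₂ hA hC harch hpos
    (fun x y hx hy => mul_nonneg (hpos x 1 hx zero_le_one) (hpos 1 y zero_le_one hy))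
    fun x hx y hy => ?_
  exact apply_eq_map_mul_of_layer_bounds hB harch (S := T.flip 1) (φ := T.flip y)
    (hT 1 zero_le_one) zero_le_one h1 (hpos 1 y zero_le_one hy.1)
    (h1 ▸ (monotone_iff_map_nonneg (T 1)).2 (hpos 1 · zero_le_one) hy.2)
    (fun u u' hu₀ hu₁ h => inf_le_apply_and_apply_le_inf hT hu₀ hu₁ hy.1 hy.2 h) hx.1 hx.2

end Bimorphism

theorem lattice_bimorphism_multiplicative_general
    {A₁ A₂ B : Type*}
    [Ring A₁] [Lattice A₁] [CovariantClass A₁ A₁ (· + ·) (· ≤ ·)] [Module ℝ A₁]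
    [Ring A₂] [Lattice A₂] [CovariantClass A₂ A₂ (· + ·) (· ≤ ·)] [Module ℝ A₂]
    [Ring B] [Lattice B] [CovariantClass B B (· + ·) (· ≤ ·)] [Module ℝ B]
    (h₁mulpos : ∀ x y : A₁, 0 ≤ x → 0 ≤ y → 0 ≤ x * y)
    (h₁falg : ∀ f g h : A₁, f ⊓ g = 0 → 0 ≤ h → (f * h) ⊓ g = 0 ∧ (h * f) ⊓ g = 0)
    (h₂mulpos : ∀ x y : A₂, 0 ≤ x → 0 ≤ y → 0 ≤ x * y)
    (h₂falg : ∀ f g h : A₂, f ⊓ g = 0 → 0 ≤ h → (f * h) ⊓ g = 0 ∧ (h * f) ⊓ g = 0)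
    (hBmulpos : ∀ x y : B, 0 ≤ x → 0 ≤ y → 0 ≤ x * y)
    (hBfalg : ∀ f g h : B, f ⊓ g = 0 → 0 ≤ h → (f * h) ⊓ g = 0 ∧ (h * f) ⊓ g = 0)
    (hBarch : ∀ x y : B, (∀ n : ℕ, n • x ≤ y) → x ≤ 0)
    (T : A₁ →ₗ[ℝ] A₂ →ₗ[ℝ] B)
    -- `T` is a lattice bimorphism:
    (hbim₁ : ∀ y : A₂, 0 ≤ y → ∀ x : A₁, T |x| y = |T x y|)
    (hbim₂ : ∀ x : A₁, 0 ≤ x → ∀ y : A₂, T x |y| = |T x y|)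
    (hunit : T 1 1 = 1) :
    ∀ a₁ x₁ : A₁, ∀ a₂ x₂ : A₂,
      T (a₁ * x₁) (a₂ * x₂) = T a₁ a₂ * T x₁ x₂ := by
  have := IsFAlgebra_s8.isOrderedRing h₁falg h₁mulpos
  have := IsFAlgebra_s8.isOrderedRing h₂falg h₂mulpos
  have := IsFAlgebra_s8.isOrderedRing hBfalg hBmulpos
  let T' : A₁ →+ A₂ →+ B := LinearMap.toAddMonoidHom'.comp T.toAddMonoidHom
  have hfac : ∀ x y, T x y = T x 1 * T 1 y :=
    apply_eq_mul_of_map_abs (T := T') h₁falg h₂falg hBfalg hBarch hbim₁ hunit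
  have hfac' : ∀ x y, T x y = T 1 y * T x 1 := fun x y =>
    apply_eq_mul_of_map_abs (T := T'.flip) h₂falg h₁falg hBfalg hBarch hbim₂ hunit y x
  have hmul₁ : ∀ x y : A₁, T (x * y) 1 = T x 1 * T y 1 :=
    map_mul_of_map_abs (S := T'.flip 1) h₁falg hBfalg hBarch (hbim₁ 1 zero_le_one) hunit
  have hmul₂ : ∀ x y : A₂, T 1 (x * y) = T 1 x * T 1 y :=
    map_mul_of_map_abs (S := T' 1) h₂falg hBfalg hBarch (hbim₂ 1 zero_le_one) hunit
  intro a₁ x₁ a₂ x₂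
  calc T (a₁ * x₁) (a₂ * x₂) = T (a₁ * x₁) 1 * T 1 (a₂ * x₂) := hfac _ _
    _ = T a₁ 1 * (T x₁ 1 * T 1 a₂) * T 1 x₂ := by
        rw [hmul₁ a₁ x₁, hmul₂ a₂ x₂]; simp only [mul_assoc]
    _ = T a₁ 1 * (T 1 a₂ * T x₁ 1) * T 1 x₂ := by rw [← hfac x₁ a₂, hfac' x₁ a₂]
    _ = T a₁ a₂ * T x₁ x₂ := by rw [hfac a₁ a₂, hfac x₁ x₂]; simp only [mul_assoc]

/-- A lattice bimorphism between unital Archimedean f-algebras sending the pair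
of units to the unit is a multiplicative bilinear map. -/
theorem lattice_bimorphism_multiplicative
    {A₁ A₂ B : Type*}
    [Ring A₁] [Lattice A₁] [CovariantClass A₁ A₁ (· + ·) (· ≤ ·)] [Module ℝ A₁]
    [Ring A₂] [Lattice A₂] [CovariantClass A₂ A₂ (· + ·) (· ≤ ·)] [Module ℝ A₂]
    [Ring B] [Lattice B] [CovariantClass B B (· + ·) (· ≤ ·)] [Module ℝ B]
    (h₁mulpos : ∀ x y : A₁, 0 ≤ x → 0 ≤ y → 0 ≤ x * y)
    (h₁falg : ∀ f g h : A₁, f ⊓ g = 0 → 0 ≤ h → (f * h) ⊓ g = 0 ∧ (h * f) ⊓ g = 0)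
    (h₁arch : ∀ x y : A₁, (∀ n : ℕ, n • x ≤ y) → x ≤ 0)
    (h₂mulpos : ∀ x y : A₂, 0 ≤ x → 0 ≤ y → 0 ≤ x * y)
    (h₂falg : ∀ f g h : A₂, f ⊓ g = 0 → 0 ≤ h → (f * h) ⊓ g = 0 ∧ (h * f) ⊓ g = 0)
    (h₂arch : ∀ x y : A₂, (∀ n : ℕ, n • x ≤ y) → x ≤ 0)
    (hBmulpos : ∀ x y : B, 0 ≤ x → 0 ≤ y → 0 ≤ x * y)
    (hBfalg : ∀ f g h : B, f ⊓ g = 0 → 0 ≤ h → (f * h) ⊓ g = 0 ∧ (h * f) ⊓ g = 0)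
    (hBarch : ∀ x y : B, (∀ n : ℕ, n • x ≤ y) → x ≤ 0)
    (T : A₁ →ₗ[ℝ] A₂ →ₗ[ℝ] B)
    -- `T` is a lattice bimorphism:
    (hbim₁ : ∀ y : A₂, 0 ≤ y → ∀ x : A₁, T |x| y = |T x y|)
    (hbim₂ : ∀ x : A₁, 0 ≤ x → ∀ y : A₂, T x |y| = |T x y|)
    (hunit : T 1 1 = 1) :
    ∀ a₁ x₁ : A₁, ∀ a₂ x₂ : A₂,
      T (a₁ * x₁) (a₂ * x₂) = T a₁ a₂ * T x₁ x₂ :=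
  lattice_bimorphism_multiplicative_general h₁mulpos h₁falg h₂mulpos h₂falg hBmulpos hBfalg hBarch T
    hbim₁ hbim₂ hunit
end

section
/- Let X and Y be compact Hausdorff spaces. The Riesz subspace of C(X × Y) generated by the algebraic tensor product C(X) ⊗ C(Y) (the set of functions (s,t) ↦ Σ fᵢ(s)gᵢ(t) with fᵢ ∈ C(X), gᵢ ∈ C(Y)) is a subalgebra of C(X × Y). -/
/-!
Let `R` be the Riesz subspace generated by `T = C(X) ⊗ C(Y)`. For `0 ≤ c ∈ T`, the functions `w ∈ R`
with `c * w ∈ R` form a subspace containing `T` (as `T` is closed under products) and closed under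
`|·|` (as `|c * w| = c * |w|`), so it is all of `R`. Since `T` is spanned by its nonnegative
elements `f⁺ ⊗ g⁺, f⁺ ⊗ g⁻, …`, every `a ∈ T` multiplies `R` into `R`. Finally, the multipliers
`u ∈ R` of `R` are closed under `|·|`: writing `v = v⁺ - v⁻`, we get `|u| * v± = |u * v±| ∈ R`.
Hence they form a subspace containing `T` and closed under `|·|`, i.e. all of `R`.
-/

open ContinuousMap Submodule

lemma posPart_mem_of_forall_abs_mem {E : Type*} [AddCommGroup E] [Lattice E]
    [IsOrderedAddMonoid E] [Module ℝ E] {S : Submodule ℝ E} (hS : ∀ u ∈ S, |u| ∈ S) {u : E}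
    (hu : u ∈ S) : u⁺ ∈ S := by
  have h : u⁺ = (2⁻¹ : ℝ) • (u + |u|) := by
    linear_combination (norm := module)
      (2⁻¹ : ℝ) • (posPart_sub_negPart u + posPart_add_negPart u)
  rw [h]
  exact S.smul_mem _ (S.add_mem hu (hS u hu))

lemma negPart_mem_of_forall_abs_mem {E : Type*} [AddCommGroup E] [Lattice E]
    [IsOrderedAddMonoid E] [Module ℝ E] {S : Submodule ℝ E} (hS : ∀ u ∈ S, |u| ∈ S) {u : E}
    (hu : u ∈ S) : u⁻ ∈ S := by
  have h : u⁻ = u⁺ - u := by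
    linear_combination (norm := module) -posPart_sub_negPart u
  rw [h]
  exact S.sub_mem (posPart_mem_of_forall_abs_mem hS hu) hu

namespace ContinuousMap

variable {Z : Type*} [TopologicalSpace Z]

lemma abs_mul_of_nonneg_left {c : C(Z, ℝ)} (hc : 0 ≤ c) (w : C(Z, ℝ)) : |c * w| = c * |w| := by
  ext z
  simp only [mul_apply, abs_apply, abs_mul, abs_of_nonneg (le_def.mp hc z)]

/-- A subspace closed under `|·|` is a sublattice, since `u ⊔ v = (u + v + |u - v|) / 2`; so this
is the Riesz subspace generated by `s`. -/
def rieszSpan (s : Submodule ℝ C(Z, ℝ)) : Submodule ℝ C(Z, ℝ) :=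
  sInf {S | s ≤ S ∧ ∀ u ∈ S, |u| ∈ S}

variable (s : Submodule ℝ C(Z, ℝ))

lemma le_rieszSpan : s ≤ rieszSpan s :=
  le_sInf fun _ hS => hS.1

lemma abs_mem_rieszSpan {u : C(Z, ℝ)} (hu : u ∈ rieszSpan s) : |u| ∈ rieszSpan s :=
  mem_sInf.mpr fun S hS => hS.2 u (mem_sInf.mp hu S hS)

lemma rieszSpan_le {S : Submodule ℝ C(Z, ℝ)} (hsS : s ≤ S) (hS : ∀ u ∈ S, |u| ∈ S) :
    rieszSpan s ≤ S :=
  sInf_le ⟨hsS, hS⟩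

lemma mul_mem_rieszSpan_of_nonneg {c : C(Z, ℝ)} (hc : 0 ≤ c)
    (hcs : ∀ a ∈ s, c * a ∈ rieszSpan s) {v : C(Z, ℝ)} (hv : v ∈ rieszSpan s) :
    c * v ∈ rieszSpan s := by
  suffices rieszSpan s ≤ rieszSpan s ⊓ (rieszSpan s).comap (LinearMap.mulLeft ℝ c) from
    (this hv).2
  refine rieszSpan_le s (fun a ha => ⟨le_rieszSpan s ha, hcs a ha⟩) ?_
  rintro w ⟨hw, hcw⟩
  refine ⟨abs_mem_rieszSpan s hw, ?_⟩
  simpa [abs_mul_of_nonneg_left hc] using abs_mem_rieszSpan s hcw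

lemma abs_mul_mem_rieszSpan {u : C(Z, ℝ)} (hu : ∀ v ∈ rieszSpan s, u * v ∈ rieszSpan s)
    {v : C(Z, ℝ)} (hv : v ∈ rieszSpan s) : |u| * v ∈ rieszSpan s := by
  have hnonneg : ∀ w ∈ rieszSpan s, 0 ≤ w → |u| * w ∈ rieszSpan s := fun w hw hw₀ => by
    rw [mul_comm, ← abs_mul_of_nonneg_left hw₀, mul_comm]
    exact abs_mem_rieszSpan s (hu w hw)
  have hS : ∀ w ∈ rieszSpan s, |w| ∈ rieszSpan s := fun w => abs_mem_rieszSpan s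
  rw [← posPart_sub_negPart v, mul_sub]
  exact sub_mem (hnonneg _ (posPart_mem_of_forall_abs_mem hS hv) (posPart_nonneg v))
    (hnonneg _ (negPart_mem_of_forall_abs_mem hS hv) (negPart_nonneg v))

lemma mul_mem_rieszSpan_of_mem_span_nonneg (hmul : s * s ≤ s) {a : C(Z, ℝ)}
    (ha : a ∈ span ℝ {c ∈ s | 0 ≤ c}) {v : C(Z, ℝ)} (hv : v ∈ rieszSpan s) :
    a * v ∈ rieszSpan s := by
  induction ha using span_induction with
  | mem c hc =>
    exact mul_mem_rieszSpan_of_nonneg s hc.2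
      (fun b hb => le_rieszSpan s (hmul (mul_mem_mul hc.1 hb))) hv
  | zero => simp
  | add a b _ _ ha hb => simpa only [add_mul] using add_mem ha hb
  | smul r a _ ha => simpa only [smul_mul_assoc] using smul_mem _ r ha

theorem rieszSpan_mul_rieszSpan_le (hmul : s * s ≤ s)
    (hspan : s ≤ span ℝ {c ∈ s | 0 ≤ c}) : rieszSpan s * rieszSpan s ≤ rieszSpan s := by
  let multipliers : Submodule ℝ C(Z, ℝ) :=
    rieszSpan s ⊓ ⨅ v ∈ rieszSpan s, (rieszSpan s).comap (LinearMap.mulRight ℝ v)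
  have hmem : ∀ u, u ∈ multipliers ↔ u ∈ rieszSpan s ∧ ∀ v ∈ rieszSpan s, u * v ∈ rieszSpan s :=
    fun u => by simp [multipliers]
  have hle : rieszSpan s ≤ multipliers := by
    refine rieszSpan_le s (fun a ha => (hmem a).2 ⟨le_rieszSpan s ha,
      fun v => mul_mem_rieszSpan_of_mem_span_nonneg s hmul (hspan ha)⟩) fun u hu => ?_
    obtain ⟨huR, hu⟩ := (hmem u).1 hu
    exact (hmem |u|).2 ⟨abs_mem_rieszSpan s huR, fun v => abs_mul_mem_rieszSpan s hu⟩
  exact mul_le.2 fun u hu v hv => ((hmem u).1 (hle hu)).2 v hv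

end ContinuousMap

section ElementaryTensors

variable (X Y : Type*) [TopologicalSpace X] [TopologicalSpace Y]

def elementaryTensors : Set C(X × Y, ℝ) :=
  {h | ∃ f : C(X, ℝ), ∃ g : C(Y, ℝ), ∀ p : X × Y, h p = f p.1 * g p.2}

variable {X Y}

lemma comp_fst_mul_comp_snd_mem_elementaryTensors (f : C(X, ℝ)) (g : C(Y, ℝ)) :
    f.comp fst * g.comp snd ∈ elementaryTensors X Y :=
  ⟨f, g, fun _ => rfl⟩

lemma mul_mem_elementaryTensors {h₁ h₂ : C(X × Y, ℝ)} (h₁_mem : h₁ ∈ elementaryTensors X Y)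
    (h₂_mem : h₂ ∈ elementaryTensors X Y) : h₁ * h₂ ∈ elementaryTensors X Y := by
  obtain ⟨f₁, g₁, h₁_eq⟩ := h₁_mem
  obtain ⟨f₂, g₂, h₂_eq⟩ := h₂_mem
  refine ⟨f₁ * f₂, g₁ * g₂, fun p => ?_⟩
  simp only [mul_apply, h₁_eq, h₂_eq]
  ring

lemma span_elementaryTensors_mul_le :
    span ℝ (elementaryTensors X Y) * span ℝ (elementaryTensors X Y) ≤
      span ℝ (elementaryTensors X Y) := by
  rw [span_mul_span]
  exact span_mono (Set.mul_subset_iff.2 fun _ h₁ _ h₂ => mul_mem_elementaryTensors h₁ h₂)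

lemma mem_span_nonneg_elementaryTensors {h : C(X × Y, ℝ)} (hh : h ∈ elementaryTensors X Y) :
    h ∈ span ℝ {c ∈ elementaryTensors X Y | 0 ≤ c} := by
  have hnonneg : ∀ f : C(X, ℝ), ∀ g : C(Y, ℝ), 0 ≤ f → 0 ≤ g →
      f.comp fst * g.comp snd ∈ span ℝ {c ∈ elementaryTensors X Y | 0 ≤ c} :=
    fun f g hf hg => subset_span ⟨comp_fst_mul_comp_snd_mem_elementaryTensors f g,
      fun p => mul_nonneg (le_def.mp hf p.1) (le_def.mp hg p.2)⟩
  obtain ⟨f, g, hfg⟩ := hh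
  obtain rfl : h = f.comp fst * g.comp snd := ext hfg
  rw [← posPart_sub_negPart f, ← posPart_sub_negPart g, sub_comp, sub_comp, sub_mul, mul_sub,
    mul_sub]
  exact sub_mem
    (sub_mem (hnonneg _ _ (posPart_nonneg f) (posPart_nonneg g))
      (hnonneg _ _ (posPart_nonneg f) (negPart_nonneg g)))
    (sub_mem (hnonneg _ _ (negPart_nonneg f) (posPart_nonneg g))
      (hnonneg _ _ (negPart_nonneg f) (negPart_nonneg g)))

lemma span_elementaryTensors_le_span_nonneg :
    span ℝ (elementaryTensors X Y) ≤
      span ℝ {c ∈ span ℝ (elementaryTensors X Y) | 0 ≤ c} := by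
  refine span_le.2 fun _ hh => span_mono ?_ (mem_span_nonneg_elementaryTensors hh)
  exact fun _ hc => ⟨subset_span hc.1, hc.2⟩

end ElementaryTensors

theorem rieszSubspace_of_tensor_is_subalgebra_general
    {X Y : Type*} [TopologicalSpace X] [TopologicalSpace Y] :
    let tensor : Submodule ℝ C(X × Y, ℝ) :=
      Submodule.span ℝ
        {h : C(X × Y, ℝ) | ∃ f : C(X, ℝ), ∃ g : C(Y, ℝ), ∀ p : X × Y, h p = f p.1 * g p.2}
    let R : Submodule ℝ C(X × Y, ℝ) :=
      sInf {S : Submodule ℝ C(X × Y, ℝ) | tensor ≤ S ∧ ∀ u ∈ S, |u| ∈ S}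
    ∀ u ∈ R, ∀ v ∈ R, u * v ∈ R := by
  intro tensor R u hu v hv
  exact mul_le.1 (rieszSpan_mul_rieszSpan_le tensor span_elementaryTensors_mul_le
    span_elementaryTensors_le_span_nonneg) u hu v hv

/-- For compact Hausdorff `X`, `Y`, the Riesz subspace of `C(X × Y)` generated
by the algebraic tensor product `C(X) ⊗ C(Y)` (sums of products
`(s,t) ↦ f(s)g(t)`) is a subalgebra of `C(X × Y)`. -/
theorem rieszSubspace_of_tensor_is_subalgebra
    {X Y : Type*} [TopologicalSpace X] [CompactSpace X] [T2Space X]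
    [TopologicalSpace Y] [CompactSpace Y] [T2Space Y] :
    let tensor : Submodule ℝ C(X × Y, ℝ) :=
      Submodule.span ℝ
        {h : C(X × Y, ℝ) | ∃ f : C(X, ℝ), ∃ g : C(Y, ℝ), ∀ p : X × Y, h p = f p.1 * g p.2}
    let R : Submodule ℝ C(X × Y, ℝ) :=
      sInf {S : Submodule ℝ C(X × Y, ℝ) | tensor ≤ S ∧ ∀ u ∈ S, |u| ∈ S}
    ∀ u ∈ R, ∀ v ∈ R, u * v ∈ R :=
  rieszSubspace_of_tensor_is_subalgebra_general
end
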